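/- Let n ≥ 2 be an integer, let Ω be a nonempty bounded open subset of ℝ^n, let w ∈ (0,1)^n, and let ε > 0 be such that the closure of w + εΩ is contained in (0,1)^n. Define T(ε) ≡ ℝ^n \ ⋃_{z ∈ ℤ^n} cl(z + w + εΩ). If u : ℝ^n → ℝ is continuous on cl T(ε), is twice continuously differentiable with vanishing Laplacian on T(ε), and is ℤ^n-periodic (u(x + e_i) = u(x) for all x ∈ cl T(ε) and all i ∈ {1,…,n}, where e_1,…,e_n is the canonical basis of ℝ^n), then the maximum of u over cl T(ε) is attained on ∂(w + εΩ), i.e. sup_{x ∈ cl T(ε)} u(x) = max_{x ∈ ∂(w+εΩ)} u(x). -/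

import Mathlib

open scoped BigOperators

noncomputable section

/-- The Laplacian of `u : ℝⁿ → ℝ` at `x`, i.e. `∑ i, ∂²u/∂xᵢ² (x)`. -/
def lapl {n : ℕ} (u : EuclideanSpace ℝ (Fin n) → ℝ) (x : EuclideanSpace ℝ (Fin n)) : ℝ :=
  ∑ i : Fin n,
    fderiv ℝ (fun y => fderiv ℝ u y (EuclideanSpace.single i 1)) x (EuclideanSpace.single i 1)

/-- `u` is harmonic on `s`: twice continuously differentiable there with vanishing Laplacian. -/
def IsHarmonicOn {n : ℕ} (u : EuclideanSpace ℝ (Fin n) → ℝ)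
    (s : Set (EuclideanSpace ℝ (Fin n))) : Prop :=
  ContDiffOn ℝ 2 u s ∧ ∀ x ∈ s, lapl u x = 0

/-- `u` is `ℤⁿ`-periodic on `s`: `u (x + eᵢ) = u x` for `x ∈ s` and each canonical basis
vector `eᵢ`. -/
def IsPeriodicOn {n : ℕ} (u : EuclideanSpace ℝ (Fin n) → ℝ)
    (s : Set (EuclideanSpace ℝ (Fin n))) : Prop :=
  ∀ x ∈ s, ∀ i : Fin n, u (x + EuclideanSpace.single i 1) = u x

/-- The fundamental cell `A = (0,1)ⁿ`. -/
def unitCell (n : ℕ) : Set (EuclideanSpace ℝ (Fin n)) :=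
  {x | ∀ i, x i ∈ Set.Ioo (0 : ℝ) 1}

/-- The perforation `w + ε Ω = {w + ε x : x ∈ Ω}`. -/
def hole {n : ℕ} (Ω : Set (EuclideanSpace ℝ (Fin n))) (w : EuclideanSpace ℝ (Fin n)) (ε : ℝ) :
    Set (EuclideanSpace ℝ (Fin n)) :=
  (fun x => w + ε • x) '' Ω

/-- The integer vector `z ∈ ℤⁿ` as a point of `ℝⁿ`. -/
def intVec {n : ℕ} (z : Fin n → ℤ) : EuclideanSpace ℝ (Fin n) :=
  WithLp.toLp 2 (fun i => (z i : ℝ))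

/-- The periodically perforated domain `T(ε) = ℝⁿ \ ⋃ z ∈ ℤⁿ, cl (z + w + ε Ω)`. -/
def perfDom {n : ℕ} (Ω : Set (EuclideanSpace ℝ (Fin n))) (w : EuclideanSpace ℝ (Fin n)) (ε : ℝ) :
    Set (EuclideanSpace ℝ (Fin n)) :=
  (⋃ z : Fin n → ℤ, closure ((fun x => intVec z + x) '' hole Ω w ε))ᶜ

/-- A bounded open set `Ω ⊆ ℝⁿ` is of class `C^{1,α}`: near each point `p` of `∂Ω`, after an
orthogonal change of coordinates `R` and a translation by `p`, the boundary `∂Ω` coincides with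
the graph of a continuously differentiable function `γ` of the first `n-1` coordinates whose
gradient is `α`-Hölder continuous, with `Ω` lying locally on one side of this graph. -/
def IsC1AlphaDomain {n : ℕ} (hn : 0 < n) (α : ℝ)
    (Ω : Set (EuclideanSpace ℝ (Fin n))) : Prop :=
  ∀ p ∈ frontier Ω,
    ∃ (R : EuclideanSpace ℝ (Fin n) ≃ₗᵢ[ℝ] EuclideanSpace ℝ (Fin n)) (r : ℝ)
      (γ : EuclideanSpace ℝ (Fin (n - 1)) → ℝ) (C : NNReal),
      0 < r ∧ ContDiff ℝ 1 γ ∧ HolderWith C α.toNNReal (fderiv ℝ γ) ∧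
      ∀ x ∈ Metric.ball p r,
        (x ∈ frontier Ω ↔
          R (x - p) ⟨n - 1, Nat.sub_lt hn Nat.one_pos⟩ =
            γ (WithLp.toLp 2 (fun i => R (x - p) (Fin.castLE (Nat.sub_le n 1) i)))) ∧
        (x ∈ Ω ↔
          R (x - p) ⟨n - 1, Nat.sub_lt hn Nat.one_pos⟩ <
            γ (WithLp.toLp 2 (fun i => R (x - p) (Fin.castLE (Nat.sub_le n 1) i))))

/-- `g ∈ C^{1,α}(S)`: `g` is the restriction to `S` of a continuously differentiable function
defined on an open neighbourhood of `S` whose gradient is `α`-Hölder continuous there. -/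
def MemC1Alpha {n : ℕ} (α : ℝ) (S : Set (EuclideanSpace ℝ (Fin n)))
    (g : EuclideanSpace ℝ (Fin n) → ℝ) : Prop :=
  ∃ (U : Set (EuclideanSpace ℝ (Fin n))) (G : EuclideanSpace ℝ (Fin n) → ℝ) (C : NNReal),
    IsOpen U ∧ S ⊆ U ∧ ContDiffOn ℝ 1 G U ∧ HolderOnWith C α.toNNReal (fderiv ℝ G) U ∧
    Set.EqOn G g S

/-!
By periodicity, `u` attains its maximum `M` over `cl T(ε)` on the compact set of points of
`cl T(ε)` lying in the unit box. Every point of `cl T(ε) \ T(ε)` is a lattice translate of a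
point of `∂ cl (w + εΩ)`, so if `M` were not attained there, the set `{u = M}` would lie in the
open set `T(ε)`. There it is open by the strong maximum principle, which follows from Hopf's
lemma proved with the barrier `exp (-a ‖x - y‖²)`; it is also closed in `ℝⁿ`, nonempty and
disjoint from the holes, contradicting the connectedness of `ℝⁿ`.
-/

open Filter Topology Metric Set

theorem ContDiffAt.differentiableAt_fderiv_apply {E : Type*} [NormedAddCommGroup E]
    [NormedSpace ℝ E] {u : E → ℝ} {x : E} (hu : ContDiffAt ℝ 2 u x) (e : E) :
    DifferentiableAt ℝ (fun y => fderiv ℝ u y e) x :=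
  ((hu.fderiv_right (by norm_num)).differentiableAt one_ne_zero).clm_apply
    (differentiableAt_const e)

theorem ContDiffAt.eventually_differentiableAt {E : Type*} [NormedAddCommGroup E]
    [NormedSpace ℝ E] {u : E → ℝ} {x : E} (hu : ContDiffAt ℝ 2 u x) :
    ∀ᶠ y in 𝓝 x, DifferentiableAt ℝ u y :=
  (hu.eventually (by simp)).mono fun _ hy => hy.differentiableAt two_ne_zero

theorem IsLocalMax.deriv_deriv_nonpos {g : ℝ → ℝ} {a : ℝ} (hmax : IsLocalMax g a)
    (hg : ContinuousAt g a) : deriv (deriv g) a ≤ 0 := by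
  by_contra! hpos
  have hmin := isLocalMin_of_deriv_deriv_pos hpos hmax.deriv_eq_zero hg
  have hconst : g =ᶠ[𝓝 a] fun _ => g a := by
    filter_upwards [hmin, hmax] with t h₁ h₂ using le_antisymm h₂ h₁
  have hderiv : deriv g =ᶠ[𝓝 a] fun _ => 0 := by
    filter_upwards [hconst.eventuallyEq_nhds] with t ht
    rw [ht.deriv_eq, deriv_const]
  rw [hderiv.deriv_eq, deriv_const] at hpos
  exact hpos.false

theorem IsLocalMax.fderiv_fderiv_apply_nonpos {E : Type*} [NormedAddCommGroup E]
    [NormedSpace ℝ E] {u : E → ℝ} {x : E} (hmax : IsLocalMax u x) (hu : ContDiffAt ℝ 2 u x)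
    (e : E) : fderiv ℝ (fun y => fderiv ℝ u y e) x e ≤ 0 := by
  let line : ℝ → E := fun t => x + t • e
  have hline : ∀ t, HasDerivAt line e t := fun t => by
    simpa [line] using ((hasDerivAt_id t).smul_const e).const_add x
  have hline0 : line 0 = x := by simp [line]
  have hline_cont : ContinuousAt line 0 := (hline 0).continuousAt
  have hdiff : ∀ᶠ t in 𝓝 0, DifferentiableAt ℝ u (line t) :=
    hline_cont.eventually (hline0 ▸ hu.eventually_differentiableAt)
  have hderiv : deriv (u ∘ line) =ᶠ[𝓝 0] fun t => fderiv ℝ u (line t) e := by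
    filter_upwards [hdiff] with t ht
    exact (ht.hasFDerivAt.comp_hasDerivAt t (hline t)).deriv
  have hDu : DifferentiableAt ℝ (fun y => fderiv ℝ u y e) (line 0) :=
    hline0 ▸ hu.differentiableAt_fderiv_apply e
  have hsecond : deriv (deriv (u ∘ line)) 0 = fderiv ℝ (fun y => fderiv ℝ u y e) x e := by
    rw [hderiv.deriv_eq, ← hline0]
    exact (hDu.hasFDerivAt.comp_hasDerivAt 0 (hline 0)).deriv
  rw [← hsecond]
  exact IsLocalMax.deriv_deriv_nonpos ((hline0 ▸ hmax).comp_continuous hline_cont)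
    ((hline0 ▸ hu.continuousAt).comp hline_cont)

theorem lapl_nonpos_of_isLocalMax {n : ℕ} {u : EuclideanSpace ℝ (Fin n) → ℝ}
    {x : EuclideanSpace ℝ (Fin n)} (hmax : IsLocalMax u x) (hu : ContDiffAt ℝ 2 u x) :
    lapl u x ≤ 0 :=
  Finset.sum_nonpos fun _ _ => hmax.fderiv_fderiv_apply_nonpos hu _

theorem lapl_add {n : ℕ} {u v : EuclideanSpace ℝ (Fin n) → ℝ} {x : EuclideanSpace ℝ (Fin n)}
    (hu : ContDiffAt ℝ 2 u x) (hv : ContDiffAt ℝ 2 v x) :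
    lapl (u + v) x = lapl u x + lapl v x := by
  rw [lapl, lapl, lapl, ← Finset.sum_add_distrib]
  refine Finset.sum_congr rfl fun i _ => ?_
  set e : EuclideanSpace ℝ (Fin n) := EuclideanSpace.single i 1
  have hsum : (fun y => fderiv ℝ (u + v) y e) =ᶠ[𝓝 x]
      (fun y => fderiv ℝ u y e) + fun y => fderiv ℝ v y e := by
    filter_upwards [hu.eventually_differentiableAt, hv.eventually_differentiableAt]
      with y hyu hyv
    simp [fderiv_add hyu hyv]
  rw [hsum.fderiv_eq, fderiv_add (hu.differentiableAt_fderiv_apply e)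
    (hv.differentiableAt_fderiv_apply e)]
  rfl

theorem hasFDerivAt_comp_norm_sub_sq {E : Type*} [NormedAddCommGroup E] [InnerProductSpace ℝ E]
    {φ φ' : ℝ → ℝ} (hφ : ∀ t, HasDerivAt φ (φ' t) t) (y x : E) :
    HasFDerivAt (fun p => φ (‖p - y‖ ^ 2)) ((2 * φ' (‖x - y‖ ^ 2)) • innerSL ℝ (x - y)) x := by
  refine ((hφ _).comp_hasFDerivAt x ((hasFDerivAt_id x).sub_const y).norm_sq).congr_fderiv ?_
  ext v
  simp
  ring

theorem fderiv_comp_norm_sub_sq_single {n : ℕ} {φ φ' : ℝ → ℝ}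
    (hφ : ∀ t, HasDerivAt φ (φ' t) t) (y x : EuclideanSpace ℝ (Fin n)) (i : Fin n) :
    fderiv ℝ (fun p => φ (‖p - y‖ ^ 2)) x (EuclideanSpace.single i 1) =
      2 * φ' (‖x - y‖ ^ 2) * (x i - y i) := by
  rw [(hasFDerivAt_comp_norm_sub_sq hφ y x).fderiv]
  simp [EuclideanSpace.inner_single_right]

theorem lapl_comp_norm_sub_sq {n : ℕ} {φ φ' φ'' : ℝ → ℝ} (hφ : ∀ t, HasDerivAt φ (φ' t) t)
    (hφ' : ∀ t, HasDerivAt φ' (φ'' t) t) (y x : EuclideanSpace ℝ (Fin n)) :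
    lapl (fun p => φ (‖p - y‖ ^ 2)) x =
      4 * ‖x - y‖ ^ 2 * φ'' (‖x - y‖ ^ 2) + 2 * n * φ' (‖x - y‖ ^ 2) := by
  have hterm : ∀ i : Fin n,
      fderiv ℝ (fun p => fderiv ℝ (fun p => φ (‖p - y‖ ^ 2)) p (EuclideanSpace.single i 1)) x
        (EuclideanSpace.single i 1) =
      4 * φ'' (‖x - y‖ ^ 2) * (x i - y i) ^ 2 + 2 * φ' (‖x - y‖ ^ 2) := by
    intro i
    simp_rw [fderiv_comp_norm_sub_sq_single hφ y]
    have hcoord : HasFDerivAt (fun p : EuclideanSpace ℝ (Fin n) => p i - y i)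
        (EuclideanSpace.proj (𝕜 := ℝ) i : EuclideanSpace ℝ (Fin n) →L[ℝ] ℝ) x :=
      (EuclideanSpace.proj (𝕜 := ℝ) i).hasFDerivAt.sub_const (y i)
    rw [(((hasFDerivAt_comp_norm_sub_sq hφ' y x).const_mul 2).fun_mul hcoord).fderiv]
    simp [EuclideanSpace.inner_single_right]
    ring
  rw [lapl, Finset.sum_congr rfl fun i _ => hterm i, Finset.sum_add_distrib,
    ← Finset.mul_sum, EuclideanSpace.norm_sq_eq]
  simp
  ring

theorem le_of_frontier_le_of_lapl_pos {n : ℕ} {K : Set (EuclideanSpace ℝ (Fin n))}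
    (hK : IsCompact K) {v : EuclideanSpace ℝ (Fin n) → ℝ} (hcont : ContinuousOn v K)
    (hv : ∀ x ∈ interior K, ContDiffAt ℝ 2 v x) (hlap : ∀ x ∈ interior K, 0 < lapl v x)
    {M : ℝ} (hfr : ∀ x ∈ frontier K, v x ≤ M) : ∀ x ∈ K, v x ≤ M := by
  intro x hx
  obtain ⟨m, hmK, hmax⟩ := hK.exists_isMaxOn ⟨x, hx⟩ hcont
  refine (hmax hx).trans ?_
  by_cases hm : m ∈ interior K
  · have hloc : IsLocalMax v m :=
      Filter.mem_of_superset (mem_interior_iff_mem_nhds.mp hm) hmax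
    exact absurd (lapl_nonpos_of_isLocalMax hloc (hv m hm)) (hlap m hm).not_ge
  · exact hfr m ⟨subset_closure hmK, hm⟩

theorem hasDerivAt_exp_barrier (a ε c t : ℝ) :
    HasDerivAt (fun t => ε * (Real.exp (-a * t) - c)) (-a * ε * Real.exp (-a * t)) t := by
  refine ((((hasDerivAt_id t).const_mul (-a)).exp.sub_const c).const_mul ε).congr_deriv ?_
  simp only [id, mul_one]
  ring

theorem lapl_exp_barrier_pos {n : ℕ} (y x : EuclideanSpace ℝ (Fin n)) {a ε : ℝ} (c : ℝ)
    (hε : 0 < ε) (ha : n < 2 * a * ‖x - y‖ ^ 2) :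
    0 < lapl (fun p => ε * (Real.exp (-a * ‖p - y‖ ^ 2) - c)) x := by
  have hφ' : ∀ t, HasDerivAt (fun t => -a * ε * Real.exp (-a * t))
      (a ^ 2 * ε * Real.exp (-a * t)) t := fun t => by
    refine (((hasDerivAt_id t).const_mul (-a)).exp.const_mul (-a * ε)).congr_deriv ?_
    simp only [id, mul_one]
    ring
  rw [lapl_comp_norm_sub_sq (hasDerivAt_exp_barrier a ε c) hφ' y x]
  have ha0 : 0 < a := by
    by_contra! h
    have : 2 * a * ‖x - y‖ ^ 2 ≤ 0 := mul_nonpos_of_nonpos_of_nonneg (by linarith) (sq_nonneg _)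
    linarith [(n.cast_nonneg : (0:ℝ) ≤ n)]
  have key : 0 < 2 * a * ε * Real.exp (-a * ‖x - y‖ ^ 2) * (2 * a * ‖x - y‖ ^ 2 - n) := by
    have : 0 < 2 * a * ‖x - y‖ ^ 2 - n := by linarith
    positivity
  linarith [key]

theorem add_exp_barrier_le_on_annulus {n : ℕ} {s : Set (EuclideanSpace ℝ (Fin n))}
    (hs : IsOpen s) {u : EuclideanSpace ℝ (Fin n) → ℝ} (hu : IsHarmonicOn u s)
    {y : EuclideanSpace ℝ (Fin n)} {R a ε M : ℝ} (hball : closedBall y R ⊆ s)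
    (ha : n < a * R ^ 2 / 2) (hε : 0 < ε) (hle : ∀ x ∈ closedBall y R, u x ≤ M)
    (hinner : ∀ x ∈ sphere y (R / 2), u x + ε ≤ M) :
    ∀ x ∈ closedBall y R \ ball y (R / 2),
      u x + ε * (Real.exp (-a * ‖x - y‖ ^ 2) - Real.exp (-a * R ^ 2)) ≤ M := by
  set h : EuclideanSpace ℝ (Fin n) → ℝ :=
    fun p => ε * (Real.exp (-a * ‖p - y‖ ^ 2) - Real.exp (-a * R ^ 2))
  have ha0 : 0 ≤ a := by
    by_contra! ha'
    have : a * R ^ 2 ≤ 0 := mul_nonpos_of_nonpos_of_nonneg ha'.le (sq_nonneg R)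
    linarith [(n.cast_nonneg : (0:ℝ) ≤ n)]
  have huC2 : ∀ x ∈ s, ContDiffAt ℝ 2 u x := fun x hx => hu.1.contDiffAt (hs.mem_nhds hx)
  have hKs : closedBall y R \ ball y (R / 2) ⊆ s := sdiff_subset.trans hball
  have hh : ContDiff ℝ 2 h := by
    have : ContDiff ℝ 2 fun p : EuclideanSpace ℝ (Fin n) => ‖p - y‖ ^ 2 :=
      (contDiff_norm_sq ℝ).comp (contDiff_id.sub contDiff_const)
    fun_prop
  refine le_of_frontier_le_of_lapl_pos (v := u + h) ((isCompact_closedBall y R).diff isOpen_ball)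
    ((hu.1.continuousOn.mono hKs).add hh.continuous.continuousOn)
    (fun x hx => (huC2 x (hKs (interior_subset hx))).add hh.contDiffAt) ?_ ?_
  · intro x hx
    have hxK := interior_subset hx
    have hxy : R / 2 ≤ ‖x - y‖ := by simpa [dist_eq_norm] using hxK.2
    rw [lapl_add (huC2 x (hKs hxK)) hh.contDiffAt, hu.2 x (hKs hxK), zero_add]
    have hR : 0 ≤ R := dist_nonneg.trans hxK.1
    refine lapl_exp_barrier_pos y x _ hε ?_
    nlinarith [pow_le_pow_left₀ (by linarith) hxy 2]
  · intro x hx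
    rcases frontier_inter_subset (closedBall y R) (ball y (R / 2))ᶜ hx with ⟨hx, -⟩ | ⟨-, hx⟩
    · have hxR := frontier_closedBall_subset_sphere hx
      have hnorm : ‖x - y‖ = R := by rwa [mem_sphere, dist_eq_norm] at hxR
      simpa [h, hnorm] using hle x (sphere_subset_closedBall hxR)
    · have hxR : x ∈ sphere y (R / 2) :=
        frontier_ball_subset_sphere (by rwa [frontier_compl] at hx)
      have hexp : Real.exp (-a * ‖x - y‖ ^ 2) ≤ 1 :=
        Real.exp_le_one_iff.mpr (by nlinarith [sq_nonneg ‖x - y‖])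
      have : h x ≤ ε := by nlinarith [Real.exp_pos (-a * R ^ 2)]
      have := hinner x hxR
      simp only [Pi.add_apply]
      linarith

theorem hopf_lemma {n : ℕ} {s : Set (EuclideanSpace ℝ (Fin n))} (hs : IsOpen s)
    {u : EuclideanSpace ℝ (Fin n) → ℝ} (hu : IsHarmonicOn u s) {y : EuclideanSpace ℝ (Fin n)}
    {R : ℝ} (hR : 0 < R) (hball : closedBall y R ⊆ s) {M : ℝ}
    (hle : ∀ x ∈ closedBall y R, u x ≤ M) (hlt : ∀ x ∈ ball y R, u x < M)
    {x₀ : EuclideanSpace ℝ (Fin n)} (hx₀ : dist x₀ y = R) (hx₀M : u x₀ = M) :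
    0 < fderiv ℝ u x₀ (x₀ - y) := by
  have : Nontrivial (EuclideanSpace ℝ (Fin n)) :=
    nontrivial_of_ne x₀ y (dist_pos.mp (hx₀ ▸ hR))
  have hsphere : sphere y (R / 2) ⊆ ball y R := sphere_subset_ball (by linarith)
  obtain ⟨x₁, hx₁, hmax₁⟩ := (isCompact_sphere y (R / 2)).exists_isMaxOn
    (NormedSpace.sphere_nonempty.mpr (by linarith))
    (hu.1.continuousOn.mono (hsphere.trans (ball_subset_closedBall.trans hball)))
  -- `a` makes the barrier subharmonic on the annulus `R / 2 ≤ ‖x - y‖ ≤ R`, and `ε` keeps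
  -- `u` plus the barrier below `M` on its inner sphere.
  set a : ℝ := 2 * (n + 1) / R ^ 2
  set ε : ℝ := M - u x₁
  have ha : 0 < a := by positivity
  have hε : 0 < ε := sub_pos.mpr (hlt x₁ (hsphere hx₁))
  set K := closedBall y R \ ball y (R / 2)
  have hmaxK : IsMaxOn (u + fun p => ε * (Real.exp (-a * ‖p - y‖ ^ 2) - Real.exp (-a * R ^ 2)))
      K x₀ := by
    have hv := add_exp_barrier_le_on_annulus (a := a) hs hu hball
      (by simp only [a]; field_simp; linarith) hε hle fun x hx => by
        have : u x ≤ u x₁ := hmax₁ hx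
        linarith
    intro x hx
    change u x + _ ≤ u x₀ + ε * (Real.exp (-a * ‖x₀ - y‖ ^ 2) - Real.exp (-a * R ^ 2))
    rw [← dist_eq_norm, hx₀, sub_self, mul_zero, add_zero, hx₀M]
    exact hv x hx
  have hcone : y - x₀ ∈ posTangentConeAt K x₀ := by
    refine mem_posTangentConeAt_of_frequently_mem (Eventually.frequently ?_)
    filter_upwards [Ioo_mem_nhdsGT (by norm_num : (0 : ℝ) < 1 / 2)] with t ht
    have hdist : dist (x₀ + t • (y - x₀)) y = (1 - t) * R := by
      rw [dist_eq_norm, show x₀ + t • (y - x₀) - y = (1 - t) • (x₀ - y) by module, norm_smul,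
        Real.norm_of_nonneg (by linarith [ht.2]), ← dist_eq_norm, hx₀]
    simp only [K, Set.mem_sdiff, mem_closedBall, mem_ball, hdist, not_lt]
    constructor <;> nlinarith [ht.1, ht.2]
  have hux₀ : DifferentiableAt ℝ u x₀ :=
    (hu.1.contDiffAt (hs.mem_nhds (hball (mem_closedBall.mpr hx₀.le)))).differentiableAt
      two_ne_zero
  have hDv := hux₀.hasFDerivAt.add
    (hasFDerivAt_comp_norm_sub_sq (hasDerivAt_exp_barrier a ε (Real.exp (-a * R ^ 2))) y x₀)
  have hnonpos := hmaxK.localize.hasFDerivWithinAt_nonpos hDv.hasFDerivWithinAt hcone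
  have hinner : inner ℝ (x₀ - y) (y - x₀) = -R ^ 2 := by
    rw [← neg_sub y x₀, inner_neg_left, real_inner_self_eq_norm_sq, ← dist_eq_norm, dist_comm, hx₀]
  have hlin : fderiv ℝ u x₀ (y - x₀) = -fderiv ℝ u x₀ (x₀ - y) := by
    rw [← map_neg, neg_sub]
  simp only [add_apply, smul_apply, innerSL_apply_apply, smul_eq_mul, hinner, hlin] at hnonpos
  nlinarith [mul_pos (mul_pos (mul_pos ha (Real.exp_pos (-a * ‖x₀ - y‖ ^ 2))) hε) (pow_pos hR 2)]

theorem IsHarmonicOn.isOpen_setOf_eq_of_le {n : ℕ} {s : Set (EuclideanSpace ℝ (Fin n))}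
    (hs : IsOpen s) {u : EuclideanSpace ℝ (Fin n) → ℝ} (hu : IsHarmonicOn u s) {M : ℝ}
    (hle : ∀ x ∈ s, u x ≤ M) : IsOpen {x | x ∈ s ∧ u x = M} := by
  refine isOpen_iff_mem_nhds.mpr fun a ⟨has, haM⟩ => ?_
  by_contra hnot
  obtain ⟨ρ, hρ, hρs⟩ := Metric.isOpen_iff.mp hs a has
  have hBs : closedBall a (ρ / 2) ⊆ s := (closedBall_subset_ball (by linarith)).trans hρs
  set A := closedBall a (ρ / 2) ∩ u ⁻¹' {M}
  have hA : IsClosed A := (hu.1.continuousOn.mono hBs).preimage_isClosed_of_isClosed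
    isClosed_closedBall isClosed_singleton
  have haA : a ∈ A := ⟨mem_closedBall_self (by linarith), haM⟩
  obtain ⟨y, hya, hyA⟩ : ∃ y ∈ ball a (ρ / 4), y ∉ A := by
    by_contra! h
    exact hnot (Filter.mem_of_superset (ball_mem_nhds a (by linarith)) fun y hy =>
      ⟨hBs (h y hy).1, (h y hy).2⟩)
  -- The largest ball around `y` avoiding `A` touches `A` at a point `x₀`.
  set R := infDist y A
  have hR : 0 < R := (hA.notMem_iff_infDist_pos ⟨a, haA⟩).mp hyA
  have hRa : R < ρ / 4 := (infDist_le_dist_of_mem haA).trans_lt (mem_ball.mp hya)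
  obtain ⟨x₀, hx₀A, hx₀R⟩ := hA.exists_infDist_eq_dist ⟨a, haA⟩ y
  have hball : closedBall y R ⊆ closedBall a (ρ / 2) := fun t ht => by
    have := dist_triangle t y a
    rw [mem_closedBall] at ht ⊢
    linarith [mem_ball.mp hya]
  have hlt : ∀ t ∈ ball y R, u t < M := fun t ht => by
    refine (hle t (hBs (hball (ball_subset_closedBall ht)))).lt_of_ne fun htM => ?_
    have htA : t ∈ A := ⟨hball (ball_subset_closedBall ht), htM⟩
    have := infDist_le_dist_of_mem (x := y) htA
    rw [mem_ball, dist_comm] at ht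
    linarith
  have hloc : IsLocalMax u x₀ := Filter.mem_of_superset (hs.mem_nhds (hBs hx₀A.1))
    fun t ht => hx₀A.2 ▸ hle t ht
  have hpos := hopf_lemma hs hu hR (hball.trans hBs) (fun t ht => hle t (hBs (hball ht))) hlt
    (by rw [dist_comm, ← hx₀R]) hx₀A.2
  rw [hloc.fderiv_eq_zero] at hpos
  exact hpos.false

section Lattice

variable {n : ℕ}

@[simp]
theorem intVec_apply (z : Fin n → ℤ) (i : Fin n) : intVec z i = z i := rfl

theorem intVec_add (z₁ z₂ : Fin n → ℤ) : intVec (z₁ + z₂) = intVec z₁ + intVec z₂ := by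
  ext i; simp

theorem intVec_neg (z : Fin n → ℤ) : intVec (-z) = -intVec z := by
  ext i; simp

theorem intVec_zero : intVec (0 : Fin n → ℤ) = 0 := by
  ext i; simp

theorem intVec_single (i : Fin n) : intVec (Pi.single i 1) = EuclideanSpace.single i 1 := by
  ext j; by_cases h : j = i <;> simp [h]

theorem eq_zero_of_mem_unitCell_of_add_intVec_mem {x : EuclideanSpace ℝ (Fin n)}
    {z : Fin n → ℤ} (hx : x ∈ unitCell n) (hxz : x + intVec z ∈ unitCell n) : z = 0 := by
  funext i
  have h₁ := hx i
  have h₂ := hxz i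
  simp only [PiLp.add_apply, intVec_apply, Set.mem_Ioo] at h₁ h₂
  have : -1 < z i := by exact_mod_cast (by linarith : (-1 : ℝ) < z i)
  have : z i < 1 := by exact_mod_cast (by linarith : (z i : ℝ) < 1)
  simp only [Pi.zero_apply]
  omega

theorem intVec_notMem_unitCell (hn : n ≠ 0) (z : Fin n → ℤ) : intVec z ∉ unitCell n := by
  intro hz
  set i₀ : Fin n := ⟨0, Nat.pos_of_ne_zero hn⟩
  obtain ⟨h₀, h₁⟩ := hz i₀
  rw [intVec_apply] at h₀ h₁
  have : 0 < z i₀ := by exact_mod_cast h₀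
  have : z i₀ < 1 := by exact_mod_cast h₁
  omega

theorem isOpen_unitCell : IsOpen (unitCell n) := by
  have : unitCell n = ⋂ i, (fun x : EuclideanSpace ℝ (Fin n) => x i) ⁻¹' Set.Ioo 0 1 := by
    ext; simp [unitCell]
  rw [this]
  exact isOpen_iInter_of_finite fun i => isOpen_Ioo.preimage (PiLp.continuous_apply 2 _ i)

theorem locallyFinite_intVec_add_unitCell :
    LocallyFinite fun z : Fin n → ℤ => (intVec z + ·) '' unitCell n := by
  intro x
  refine ⟨ball x 1, ball_mem_nhds x one_pos, (Set.Finite.pi' fun i =>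
    Set.finite_Icc (⌊x i⌋ - 2) (⌊x i⌋ + 2)).subset ?_⟩
  rintro z ⟨_, ⟨c, hc, rfl⟩, hcx⟩ i
  have hdist : |(intVec z + c) i - x i| < 1 :=
    (PiLp.norm_apply_le (intVec z + c - x) i).trans_lt (mem_ball.mp hcx)
  simp only [PiLp.add_apply, intVec_apply] at hdist
  have hci := hc i
  have hfl := Int.floor_le (x i)
  have hfl' := Int.lt_floor_add_one (x i)
  rw [abs_lt] at hdist
  simp only [Set.mem_Ioo] at hci
  constructor
  · have : (⌊x i⌋ : ℝ) - 3 < z i := by linarith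
    have : ⌊x i⌋ - 3 < z i := by exact_mod_cast this
    omega
  · have : (z i : ℝ) < ⌊x i⌋ + 3 := by linarith
    have : z i < ⌊x i⌋ + 3 := by exact_mod_cast this
    omega

end Lattice

section PerforatedDomain

variable {n : ℕ} {Ω : Set (EuclideanSpace ℝ (Fin n))} {w : EuclideanSpace ℝ (Fin n)} {ε : ℝ}

theorem closure_intVec_add_hole (z : Fin n → ℤ) :
    closure ((intVec z + ·) '' hole Ω w ε) = (intVec z + ·) '' closure (hole Ω w ε) :=
  ((Homeomorph.addLeft (intVec z)).image_closure _).symm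

theorem notMem_perfDom_iff {x : EuclideanSpace ℝ (Fin n)} :
    x ∉ perfDom Ω w ε ↔ ∃ z, x + intVec z ∈ closure (hole Ω w ε) := by
  simp only [perfDom, Set.mem_compl_iff, not_not, Set.mem_iUnion, closure_intVec_add_hole]
  constructor
  · rintro ⟨z, c, hc, rfl⟩
    refine ⟨-z, ?_⟩
    rwa [intVec_neg, add_neg_cancel_comm]
  · rintro ⟨z, hz⟩
    refine ⟨-z, x + intVec z, hz, ?_⟩
    simp only [intVec_neg]
    abel

theorem closure_hole_subset_compl_perfDom : closure (hole Ω w ε) ⊆ (perfDom Ω w ε)ᶜ :=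
  fun _ hx => notMem_perfDom_iff.mpr ⟨0, by rwa [intVec_zero, add_zero]⟩

theorem add_intVec_mem_perfDom_iff {x : EuclideanSpace ℝ (Fin n)} (z : Fin n → ℤ) :
    x + intVec z ∈ perfDom Ω w ε ↔ x ∈ perfDom Ω w ε := by
  rw [← not_iff_not, notMem_perfDom_iff, notMem_perfDom_iff]
  constructor
  · rintro ⟨z', hz'⟩
    exact ⟨z + z', by rwa [intVec_add, ← add_assoc]⟩
  · rintro ⟨z', hz'⟩
    exact ⟨z' - z, by rwa [sub_eq_add_neg, intVec_add, intVec_neg, add_comm (intVec z'),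
      ← add_assoc, add_neg_cancel_right]⟩

theorem add_intVec_mem_closure_perfDom {x : EuclideanSpace ℝ (Fin n)}
    (hx : x ∈ closure (perfDom Ω w ε)) (z : Fin n → ℤ) :
    x + intVec z ∈ closure (perfDom Ω w ε) := by
  have hT : (· + intVec z) ⁻¹' perfDom Ω w ε = perfDom Ω w ε :=
    Set.ext fun _ => add_intVec_mem_perfDom_iff z
  have := (Homeomorph.addRight (intVec z)).preimage_closure (perfDom Ω w ε)
  rw [Homeomorph.coe_addRight, hT] at this
  exact (Set.ext_iff.mp this x).mpr hx

theorem isOpen_perfDom (hsub : closure (hole Ω w ε) ⊆ unitCell n) : IsOpen (perfDom Ω w ε) := by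
  refine (LocallyFinite.isClosed_iUnion ?_ fun _ => isClosed_closure).isOpen_compl
  refine locallyFinite_intVec_add_unitCell.subset fun z => ?_
  rw [closure_intVec_add_hole]
  exact Set.image_mono hsub

theorem zero_mem_perfDom (hn : n ≠ 0) (hsub : closure (hole Ω w ε) ⊆ unitCell n) :
    0 ∈ perfDom Ω w ε := by
  by_contra h
  obtain ⟨z, hz⟩ := notMem_perfDom_iff.mp h
  exact intVec_notMem_unitCell hn z (by simpa using hsub hz)

theorem compl_perfDom_inter_unitCell_subset (hsub : closure (hole Ω w ε) ⊆ unitCell n) :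
    (perfDom Ω w ε)ᶜ ∩ unitCell n ⊆ closure (hole Ω w ε) := by
  rintro x ⟨hx, hxU⟩
  obtain ⟨z, hz⟩ := notMem_perfDom_iff.mp hx
  obtain rfl := eq_zero_of_mem_unitCell_of_add_intVec_mem hxU (hsub hz)
  rwa [intVec_zero, add_zero] at hz

theorem frontier_closure_hole_subset (hsub : closure (hole Ω w ε) ⊆ unitCell n) :
    frontier (closure (hole Ω w ε)) ⊆ closure (perfDom Ω w ε) := by
  intro b hb
  have hbU : b ∈ unitCell n := hsub (isClosed_closure.frontier_subset hb)
  rw [← frontier_compl] at hb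
  refine closure_mono (fun x hx => ?_) (isOpen_unitCell.inter_closure ⟨hbU, hb.1⟩)
  by_contra hxT
  exact hx.2 (compl_perfDom_inter_unitCell_subset hsub ⟨hxT, hx.1⟩)

theorem exists_add_intVec_mem_frontier {p : EuclideanSpace ℝ (Fin n)}
    (hp : p ∈ closure (perfDom Ω w ε)) (hpT : p ∉ perfDom Ω w ε) :
    ∃ z, p + intVec z ∈ frontier (closure (hole Ω w ε)) := by
  obtain ⟨z, hz⟩ := notMem_perfDom_iff.mp hpT
  refine ⟨z, ?_⟩
  rw [isClosed_closure.frontier_eq]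
  refine ⟨hz, fun hint => ?_⟩
  have := interior_mono closure_hole_subset_compl_perfDom hint
  rw [interior_compl] at this
  exact this (add_intVec_mem_closure_perfDom hp z)

end PerforatedDomain

theorem IsPeriodicOn.apply_add_intVec {n : ℕ} {u : EuclideanSpace ℝ (Fin n) → ℝ}
    {s : Set (EuclideanSpace ℝ (Fin n))} (hu : IsPeriodicOn u s)
    (hs : ∀ x ∈ s, ∀ z, x + intVec z ∈ s) (z : Fin n → ℤ) {x : EuclideanSpace ℝ (Fin n)}
    (hx : x ∈ s) : u (x + intVec z) = u x := by
  let periods : AddSubgroup (Fin n → ℤ) :=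
    { carrier := {z | ∀ x ∈ s, u (x + intVec z) = u x}
      add_mem' := fun {z₁ z₂} h₁ h₂ x hx => by
        rw [intVec_add, ← add_assoc, h₂ _ (hs x hx z₁), h₁ x hx]
      zero_mem' := fun x _ => by rw [intVec_zero, add_zero]
      neg_mem' := fun {z} h x hx => by
        rw [← h _ (hs x hx (-z)), add_assoc, ← intVec_add, neg_add_cancel, intVec_zero,
          add_zero] }
  have hz : z ∈ periods := by
    rw [← Finset.univ_sum_single z]
    refine AddSubgroup.sum_mem _ fun i _ => ?_
    rw [← mul_one (z i), ← smul_eq_mul, Pi.single_smul']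
    refine AddSubgroup.zsmul_mem _ (fun x hx => ?_) _
    rw [intVec_single]
    exact hu x hx i
  exact hz x hx

theorem isCompact_unitBox {n : ℕ} :
    IsCompact {x : EuclideanSpace ℝ (Fin n) | ∀ i, x i ∈ Set.Icc 0 1} := by
  have := (EuclideanSpace.equiv (Fin n) ℝ).toHomeomorph.isCompact_preimage.mpr
    (isCompact_univ_pi fun _ => isCompact_Icc (a := (0 : ℝ)) (b := 1))
  convert this using 1
  ext x
  simp only [Set.mem_ofPred_eq, Set.mem_preimage, Set.mem_univ_pi]
  rfl

section MaximumPrinciple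

variable {n : ℕ} {Ω : Set (EuclideanSpace ℝ (Fin n))} {w : EuclideanSpace ℝ (Fin n)} {ε : ℝ}
  {u : EuclideanSpace ℝ (Fin n) → ℝ}

theorem IsPeriodicOn.apply_add_intVec_of_closure_perfDom
    (hu : IsPeriodicOn u (closure (perfDom Ω w ε))) (z : Fin n → ℤ)
    {x : EuclideanSpace ℝ (Fin n)} (hx : x ∈ closure (perfDom Ω w ε)) :
    u (x + intVec z) = u x :=
  hu.apply_add_intVec (fun _ hx z => add_intVec_mem_closure_perfDom hx z) z hx

theorem exists_isMaxOn_closure_perfDom (hn : n ≠ 0) (hsub : closure (hole Ω w ε) ⊆ unitCell n)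
    (hcont : ContinuousOn u (closure (perfDom Ω w ε)))
    (hper : IsPeriodicOn u (closure (perfDom Ω w ε))) :
    ∃ p ∈ closure (perfDom Ω w ε), IsMaxOn u (closure (perfDom Ω w ε)) p := by
  set box := {x : EuclideanSpace ℝ (Fin n) | ∀ i, x i ∈ Set.Icc 0 1}
  have h0 : (0 : EuclideanSpace ℝ (Fin n)) ∈ closure (perfDom Ω w ε) ∩ box :=
    ⟨subset_closure (zero_mem_perfDom hn hsub), fun i => by simp⟩
  obtain ⟨p, hp, hmax⟩ := (isCompact_unitBox.inter_left isClosed_closure).exists_isMaxOn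
    ⟨0, h0⟩ (hcont.mono Set.inter_subset_left)
  refine ⟨p, hp.1, fun x hx => ?_⟩
  -- Translating by `-⌊x⌋` moves `x` into the box without changing `u x`.
  have hbox : x + intVec (fun i => -⌊x i⌋) ∈ box := fun i => by
    simp only [PiLp.add_apply, intVec_apply, Int.cast_neg, ← sub_eq_add_neg, Int.self_sub_floor]
    exact ⟨Int.fract_nonneg _, (Int.fract_lt_one _).le⟩
  rw [Set.mem_ofPred_eq, ← hper.apply_add_intVec_of_closure_perfDom _ hx]
  exact hmax ⟨add_intVec_mem_closure_perfDom hx _, hbox⟩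

theorem exists_mem_frontier_eq_of_isMaxOn (hΩ : Ω.Nonempty)
    (hsub : closure (hole Ω w ε) ⊆ unitCell n)
    (hcont : ContinuousOn u (closure (perfDom Ω w ε))) (harm : IsHarmonicOn u (perfDom Ω w ε))
    (hper : IsPeriodicOn u (closure (perfDom Ω w ε))) {p : EuclideanSpace ℝ (Fin n)}
    (hp : p ∈ closure (perfDom Ω w ε)) (hmax : IsMaxOn u (closure (perfDom Ω w ε)) p) :
    ∃ b ∈ frontier (closure (hole Ω w ε)), u b = u p := by
  by_contra! hne
  have hinT : ∀ x ∈ closure (perfDom Ω w ε), u x = u p → x ∈ perfDom Ω w ε := by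
    intro x hx hxp
    by_contra hxT
    obtain ⟨z, hz⟩ := exists_add_intVec_mem_frontier hx hxT
    exact hne _ hz (by rw [hper.apply_add_intVec_of_closure_perfDom z hx, hxp])
  -- The set where the maximum is attained would be a nonempty proper clopen subset of `ℝⁿ`.
  set A := {x | x ∈ perfDom Ω w ε ∧ u x = u p}
  have hAopen : IsOpen A :=
    harm.isOpen_setOf_eq_of_le (isOpen_perfDom hsub) fun x hx => hmax (subset_closure hx)
  have hAclosed : IsClosed A := by
    have : A = closure (perfDom Ω w ε) ∩ u ⁻¹' {u p} :=
      Set.ext fun x => ⟨fun hx => ⟨subset_closure hx.1, hx.2⟩, fun hx => ⟨hinT x hx.1 hx.2, hx.2⟩⟩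
    rw [this]
    exact hcont.preimage_isClosed_of_isClosed isClosed_closure isClosed_singleton
  obtain ⟨ω, hω⟩ := hΩ
  have hωA : w + ε • ω ∉ A := fun h =>
    closure_hole_subset_compl_perfDom (subset_closure ⟨ω, hω, rfl⟩) h.1
  rcases isClopen_iff.mp ⟨hAclosed, hAopen⟩ with hA | hA
  · exact (hA ▸ ⟨hinT p hp rfl, rfl⟩ : p ∈ (∅ : Set _))
  · exact hωA (hA ▸ Set.mem_univ _)

end MaximumPrinciple

theorem stmt_0_general (n : ℕ) (hn : 2 ≤ n)
    (Ω : Set (EuclideanSpace ℝ (Fin n))) (hΩne : Ω.Nonempty)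
    (w : EuclideanSpace ℝ (Fin n))
    (ε : ℝ) (hsub : closure (hole Ω w ε) ⊆ unitCell n)
    (u : EuclideanSpace ℝ (Fin n) → ℝ)
    (hucont : ContinuousOn u (closure (perfDom Ω w ε)))
    (huharm : IsHarmonicOn u (perfDom Ω w ε))
    (huper : IsPeriodicOn u (closure (perfDom Ω w ε))) :
    ∃ x₀ ∈ frontier (hole Ω w ε),
      (∀ x ∈ closure (perfDom Ω w ε), u x ≤ u x₀) ∧
      sSup (u '' closure (perfDom Ω w ε)) = u x₀ := by
  obtain ⟨p, hp, hmax⟩ := exists_isMaxOn_closure_perfDom (by omega) hsub hucont huper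
  obtain ⟨b, hb, hbp⟩ :=
    exists_mem_frontier_eq_of_isMaxOn hΩne hsub hucont huharm huper hp hmax
  have hbmax : ∀ x ∈ closure (perfDom Ω w ε), u x ≤ u b := fun x hx => hbp ▸ hmax hx
  refine ⟨b, frontier_closure_subset hb, hbmax, IsGreatest.csSup_eq ⟨?_, ?_⟩⟩
  · exact ⟨b, frontier_closure_hole_subset hsub hb, rfl⟩
  · rintro _ ⟨x, hx, rfl⟩
    exact hbmax x hx

/-- maximum principle in the periodically perforated domain: the supremum of a
periodic harmonic function over `cl T(ε)` is attained (as a maximum) on `∂(w + εΩ)`. -/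
theorem stmt_0 (n : ℕ) (hn : 2 ≤ n)
    (Ω : Set (EuclideanSpace ℝ (Fin n))) (hΩne : Ω.Nonempty)
    (hΩbd : Bornology.IsBounded Ω) (hΩop : IsOpen Ω)
    (w : EuclideanSpace ℝ (Fin n)) (hw : w ∈ unitCell n)
    (ε : ℝ) (hε : 0 < ε) (hsub : closure (hole Ω w ε) ⊆ unitCell n)
    (u : EuclideanSpace ℝ (Fin n) → ℝ)
    (hucont : ContinuousOn u (closure (perfDom Ω w ε)))
    (huharm : IsHarmonicOn u (perfDom Ω w ε))
    (huper : IsPeriodicOn u (closure (perfDom Ω w ε))) :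
    ∃ x₀ ∈ frontier (hole Ω w ε),
      (∀ x ∈ closure (perfDom Ω w ε), u x ≤ u x₀) ∧
      sSup (u '' closure (perfDom Ω w ε)) = u x₀ :=
  stmt_0_general n hn Ω hΩne w ε hsub u hucont huharm huper
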